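/- arXiv:2412.04895 — 2 statements merged into one kernel-verified Lean document; each statement's English description precedes it below -/
import Mathlib

section
/- Let M be the polynomial ring over ℂ in countably many variables x_0, x_1, x_2, … and y_0, y_1, y_2, …, with the ℤ-grading in which each x_n has weight +1 and each y_n has weight −1, and let ∂ be the unique ℂ-derivation of M satisfying ∂(x_n) = x_{n+1} and ∂(y_n) = y_{n+1} for all n. Then the weight-zero homogeneous component M_0 of M equals the smallest ∂-stable ℂ-subalgebra of M containing the elements x_n · y_0 for all n ∈ ℕ. -/
/-!
The weight-zero polynomials form a subalgebra containing every `x_n y_0`, and it is `∂`-stable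
because `∂` sends each variable to a variable of the same weight. Conversely, a `∂`-stable
subalgebra containing all `x_i y_0` contains all `x_i y_j`, by induction on `j` from
`∂(x_i y_j) = x_{i+1} y_j + x_i y_{j+1}`; and a weight-zero monomial has as many `x`'s as `y`'s,
so it is a product of such `x_i y_j`.
-/

open MvPolynomial

/-- The weight function: each `x_n = X (Sum.inl n)` has weight `+1` and each
`y_n = X (Sum.inr n)` has weight `-1`. -/
def wt : ℕ ⊕ ℕ → ℤ := Sum.elim (fun _ => 1) (fun _ => -1)

namespace MvPolynomial

variable {σ R M : Type*} [CommSemiring R] [AddCommMonoid M] {w : σ → M}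
  {D : Derivation R (MvPolynomial σ R) (MvPolynomial σ R)}

theorem IsWeightedHomogeneous.derivation
    (hD : ∀ i, IsWeightedHomogeneous w (D (X i)) (w i))
    {p : MvPolynomial σ R} {m : M} (hp : IsWeightedHomogeneous w p m) :
    IsWeightedHomogeneous w (D p) m := by
  -- `induction_on_monomial` takes a predicate on polynomials, so the weight is existential.
  have monomial_case (s : σ →₀ ℕ) (a : R) : ∃ m, IsWeightedHomogeneous w (monomial s a) m ∧
      IsWeightedHomogeneous w (D (monomial s a)) m := by
    refine induction_on_monomial (fun a => ⟨0, isWeightedHomogeneous_C w a, ?_⟩)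
      (fun p i ⟨m, hp, hDp⟩ => ?_) s a
    · simpa using isWeightedHomogeneous_zero R w 0
    · refine ⟨m + w i, hp.mul (isWeightedHomogeneous_X R w i), ?_⟩
      rw [Derivation.leibniz, smul_eq_mul, smul_eq_mul]
      exact (hp.mul (hD i)).add (add_comm (w i) m ▸ (isWeightedHomogeneous_X R w i).mul hDp)
  induction hp using IsWeightedHomogeneous.induction_on with
  | zero => simpa using isWeightedHomogeneous_zero R w m
  | add p q _ _ hp hq => simpa using hp.add hq
  | monomial s a hs =>
    obtain rfl | ha := eq_or_ne a 0
    · simpa using isWeightedHomogeneous_zero R w m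
    obtain ⟨m', hm', hDm'⟩ := monomial_case s a
    rwa [hm'.inj_right ((monomial_eq_zero).not.2 ha) (isWeightedHomogeneous_monomial w s a hs)]
      at hDm'

end MvPolynomial

theorem Finsupp.weight_eq_degree_smul_of_forall_mem_support {σ M : Type*} [AddCommMonoid M]
    {w : σ → M} {d : σ →₀ ℕ} {c : M} (h : ∀ a ∈ d.support, w a = c) :
    Finsupp.weight w d = d.degree • c := by
  rw [Finsupp.weight_apply, Finsupp.sum, Finsupp.degree_apply, Finset.sum_smul]
  exact Finset.sum_congr rfl fun a ha => by rw [h a ha]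

theorem exists_inl_inr_of_weight_wt_eq_zero {d : ℕ ⊕ ℕ →₀ ℕ} (hd : Finsupp.weight wt d = 0)
    (hd0 : d ≠ 0) : (∃ i, d (Sum.inl i) ≠ 0) ∧ ∃ j, d (Sum.inr j) ≠ 0 := by
  have degree_eq_zero (c : ℤ) (hc : c ≠ 0) (h : ∀ a ∈ d.support, wt a = c) : d.degree = 0 := by
    rw [Finsupp.weight_eq_degree_smul_of_forall_mem_support h] at hd
    simpa [hc] using hd
  constructor
  · by_contra! h
    refine hd0 ((Finsupp.degree_eq_zero_iff d).1 (degree_eq_zero (-1) (by norm_num) ?_))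
    rintro (i | j) ha
    · exact absurd (h i) (Finsupp.mem_support_iff.1 ha)
    · rfl
  · by_contra! h
    refine hd0 ((Finsupp.degree_eq_zero_iff d).1 (degree_eq_zero 1 one_ne_zero ?_))
    rintro (i | j) ha
    · rfl
    · exact absurd (h j) (Finsupp.mem_support_iff.1 ha)

section

variable {R : Type*} [CommRing R]
  {D : Derivation R (MvPolynomial (ℕ ⊕ ℕ) R) (MvPolynomial (ℕ ⊕ ℕ) R)}
  {B : Subalgebra R (MvPolynomial (ℕ ⊕ ℕ) R)}

theorem X_inl_mul_X_inr_mem_of_derivation_mem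
    (hDx : ∀ n : ℕ, D (X (Sum.inl n)) = X (Sum.inl (n + 1)))
    (hDy : ∀ n : ℕ, D (X (Sum.inr n)) = X (Sum.inr (n + 1)))
    (hBD : ∀ a ∈ B, D a ∈ B) (hB : ∀ n : ℕ, X (Sum.inl n) * X (Sum.inr 0) ∈ B) (i j : ℕ) :
    X (Sum.inl i) * X (Sum.inr j) ∈ B := by
  induction j generalizing i with
  | zero => exact hB i
  | succ j ih =>
    have leibniz : X (Sum.inl i) * X (Sum.inr (j + 1)) =
        D (X (Sum.inl i) * X (Sum.inr j)) - X (Sum.inl (i + 1)) * X (Sum.inr j) := by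
      rw [Derivation.leibniz, hDx, hDy, smul_eq_mul, smul_eq_mul]
      ring
    rw [leibniz]
    exact sub_mem (hBD _ (ih i)) (ih (i + 1))

end

section

variable {R : Type*} [CommSemiring R] {B : Subalgebra R (MvPolynomial (ℕ ⊕ ℕ) R)}

theorem monomial_one_mem_of_weight_wt_eq_zero
    (hB : ∀ i j : ℕ, X (Sum.inl i) * X (Sum.inr j) ∈ B) {d : ℕ ⊕ ℕ →₀ ℕ}
    (hd : Finsupp.weight wt d = 0) : monomial d (1 : R) ∈ B := by
  induction hn : d.degree using Nat.strong_induction_on generalizing d with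
  | _ n ih =>
  obtain rfl | hd0 := eq_or_ne d 0
  · simp
  obtain ⟨⟨i, hi⟩, ⟨j, hj⟩⟩ := exists_inl_inr_of_weight_wt_eq_zero hd hd0
  set e : ℕ ⊕ ℕ →₀ ℕ := Finsupp.single (Sum.inl i) 1 + Finsupp.single (Sum.inr j) 1
  obtain ⟨d', rfl⟩ : ∃ d', d = e + d' := by
    refine exists_add_of_le (Finsupp.le_def.2 fun a => ?_)
    rcases a with a | a <;> simp [e, Finsupp.single_apply] <;> split_ifs with h <;>
      (try subst h) <;> omega
  have he : Finsupp.weight wt e = 0 := by simp [e, wt, Finsupp.weight_single]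
  have hmul : monomial (e + d') (1 : R) = monomial d' 1 * (X (Sum.inl i) * X (Sum.inr j)) := by
    simp [e, X, monomial_mul, add_comm]
  rw [hmul]
  refine B.mul_mem (ih d'.degree ?_ (by simpa [he] using hd) rfl) (hB i j)
  simp [← hn, e]

theorem mem_of_isWeightedHomogeneous_wt_zero
    (hB : ∀ i j : ℕ, X (Sum.inl i) * X (Sum.inr j) ∈ B) {p : MvPolynomial (ℕ ⊕ ℕ) R}
    (hp : IsWeightedHomogeneous wt p 0) : p ∈ B := by
  induction hp using IsWeightedHomogeneous.induction_on with
  | zero => exact B.zero_mem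
  | add p q _ _ hp hq => exact B.add_mem hp hq
  | monomial d r hd =>
    rw [← mul_one r, ← smul_eq_mul, ← smul_monomial]
    exact B.smul_mem (monomial_one_mem_of_weight_wt_eq_zero hB hd) r

end

attribute [local instance] WeightedHomogeneousSubmodule.gradedMonoid

/-- Let `∂` be the (unique) ℂ-derivation of `M = ℂ[x₀, x₁, …, y₀, y₁, …]` with
`∂ x_n = x_{n+1}` and `∂ y_n = y_{n+1}`.  Then the weight-zero component `M₀`
equals the smallest `∂`-stable ℂ-subalgebra of `M` containing the elements
`x_n · y₀` for all `n`. -/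
theorem weight_zero_component_eq_smallest_differential_subalgebra
    (D : Derivation ℂ (MvPolynomial (ℕ ⊕ ℕ) ℂ) (MvPolynomial (ℕ ⊕ ℕ) ℂ))
    (hDx : ∀ n : ℕ, D (X (Sum.inl n)) = X (Sum.inl (n + 1)))
    (hDy : ∀ n : ℕ, D (X (Sum.inr n)) = X (Sum.inr (n + 1))) :
    (↑(weightedHomogeneousSubmodule ℂ wt 0) : Set (MvPolynomial (ℕ ⊕ ℕ) ℂ)) =
      (↑(sInf {A : Subalgebra ℂ (MvPolynomial (ℕ ⊕ ℕ) ℂ) |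
          (∀ a ∈ A, D a ∈ A) ∧
          ∀ n : ℕ, X (Sum.inl n) * X (Sum.inr 0) ∈ A}) :
        Set (MvPolynomial (ℕ ⊕ ℕ) ℂ)) := by
  have hD : ∀ a, IsWeightedHomogeneous wt (D (X a)) (wt a) := by
    rintro (n | n)
    · exact hDx n ▸ isWeightedHomogeneous_X ℂ wt (Sum.inl (n + 1))
    · exact hDy n ▸ isWeightedHomogeneous_X ℂ wt (Sum.inr (n + 1))
  have hM0 : SetLike.GradeZero.subalgebra (weightedHomogeneousSubmodule ℂ wt) ∈
      {A : Subalgebra ℂ (MvPolynomial (ℕ ⊕ ℕ) ℂ) |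
        (∀ a ∈ A, D a ∈ A) ∧ ∀ n : ℕ, X (Sum.inl n) * X (Sum.inr 0) ∈ A} :=
    ⟨fun _ ha => IsWeightedHomogeneous.derivation hD ha,
      fun _ => (isWeightedHomogeneous_X ℂ wt _).mul (isWeightedHomogeneous_X ℂ wt _)⟩
  refine subset_antisymm (fun p hp => Algebra.mem_sInf.2 fun B hB => ?_)
    (SetLike.coe_subset_coe.2 (sInf_le hM0))
  exact mem_of_isWeightedHomogeneous_wt_zero
    (X_inl_mul_X_inr_mem_of_derivation_mem hDx hDy hB.1 hB.2) hp
end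

section
/- In ℂ[u_1, u_2, v_1], the ℂ-subalgebra generated by the polynomial u_1 + u_2 + v_1 together with all polynomials f_p = (u_1 + u_2 + 2v_1)^{p−1}(u_1 + v_1)(u_2 + v_1) for p ≥ 1 is contained in the ℂ-subalgebra generated by the power sums s_p = u_1^p + u_2^p − (−1)^p v_1^p for p ≥ 1. -/
open MvPolynomial

/-- The power sums `s_p = u₁^p + u₂^p − (−1)^p v₁^p` in `ℂ[u₁, u₂, v₁]`,
with `u₁ = X 0`, `u₂ = X 1`, `v₁ = X 2`. -/
noncomputable def powerSum (p : ℕ) : MvPolynomial (Fin 3) ℂ :=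
  X 0 ^ p + X 1 ^ p - (-1 : MvPolynomial (Fin 3) ℂ) ^ p * X 2 ^ p

/-- The polynomials `f_p = (u₁ + u₂ + 2v₁)^{p−1}(u₁ + v₁)(u₂ + v₁)`. -/
noncomputable def fGen (p : ℕ) : MvPolynomial (Fin 3) ℂ :=
  (X 0 + X 1 + 2 * X 2) ^ (p - 1) * (X 0 + X 2) * (X 1 + X 2)

/-! Every `f_p` is `(s₁ - c)^{p-1} (a - c)(b - c)` with `a = u₁`, `b = u₂`, `c = -v₁`, so it is enough
to show that each `cⁿ (a - c)(b - c)` is a polynomial in the `s_k = a^k + b^k - c^k`. Summing the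
geometric series `Σ_{i<n} a^i c^{n-1-i}` gives
`s₁ s_{n+1} - s_{n+2} = (n + 2) cⁿ (a - c)(b - c) + Σ_{i<n} s_{i+1} c^{n-1-i} (a - c)(b - c)`,
and since `n + 2` is invertible over `ℂ` this determines `cⁿ (a - c)(b - c)` by strong induction. -/

open Finset

section SuperPowerSum

variable {R : Type*} [CommRing R]

def superPowerSum (a b c : R) (k : ℕ) : R := a ^ k + b ^ k - c ^ k

theorem sum_superPowerSum_mul_pow (a b c : R) (n : ℕ) :
    ∑ i ∈ range n, superPowerSum a b c (i + 1) * c ^ (n - 1 - i) =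
      a * ∑ i ∈ range n, a ^ i * c ^ (n - 1 - i) + b * ∑ i ∈ range n, b ^ i * c ^ (n - 1 - i) -
        n * c ^ n := by
  have hc : ∀ i ∈ range n, c ^ (i + 1) * c ^ (n - 1 - i) = c ^ n := fun i hi => by
    rw [← pow_add]
    congr 1
    have := mem_range.1 hi
    omega
  calc ∑ i ∈ range n, superPowerSum a b c (i + 1) * c ^ (n - 1 - i)
      = ∑ i ∈ range n, (a * (a ^ i * c ^ (n - 1 - i)) + b * (b ^ i * c ^ (n - 1 - i)) - c ^ n) :=
        sum_congr rfl fun i hi => by rw [superPowerSum, ← hc i hi]; ring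
    _ = _ := by simp [sum_add_distrib, sum_sub_distrib, mul_sum]

theorem superPowerSum_one_mul_sub (a b c : R) (n : ℕ) :
    superPowerSum a b c 1 * superPowerSum a b c (n + 1) - superPowerSum a b c (n + 2) =
      (n + 2) * (c ^ n * ((a - c) * (b - c))) +
        ∑ i ∈ range n, superPowerSum a b c (i + 1) * (c ^ (n - 1 - i) * ((a - c) * (b - c))) := by
  simp only [← mul_assoc, ← sum_mul, sum_superPowerSum_mul_pow]
  simp only [superPowerSum]
  linear_combination (-(b - c) * a) * geom_sum₂_mul a c n - (a - c) * b * geom_sum₂_mul b c n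

theorem sub_pow_mul_mem {σ : Type*} [SetLike σ R] [SubringClass σ R] {S : σ} {s c f : R}
    (hs : s ∈ S) (hf : ∀ n, c ^ n * f ∈ S) (m : ℕ) : (s - c) ^ m * f ∈ S := by
  induction m generalizing f with
  | zero => simpa using hf 0
  | succ m ih =>
    rw [pow_succ, mul_assoc]
    -- `(s - c) * f` inherits the hypothesis on `f`
    refine ih fun n => ?_
    rw [show c ^ n * ((s - c) * f) = s * (c ^ n * f) - c ^ (n + 1) * f by ring]
    exact sub_mem (mul_mem hs (hf n)) (hf (n + 1))

end SuperPowerSum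

theorem Subalgebra.mem_of_natCast_mul_mem {K A : Type*} [Field K] [CharZero K] [Semiring A]
    [Algebra K A] (S : Subalgebra K A) {m : ℕ} (hm : m ≠ 0) {x : A} (h : (m : A) * x ∈ S) :
    x ∈ S := by
  rw [← map_natCast (algebraMap K A), ← Algebra.smul_def] at h
  simpa [inv_smul_smul₀ (Nat.cast_ne_zero.mpr hm : (m : K) ≠ 0)] using S.smul_mem h (m : K)⁻¹

theorem pow_mul_sub_mul_sub_mem {K A : Type*} [Field K] [CharZero K] [CommRing A] [Algebra K A]
    {S : Subalgebra K A} {a b c : A} (hs : ∀ k, 1 ≤ k → superPowerSum a b c k ∈ S) (n : ℕ) :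
    c ^ n * ((a - c) * (b - c)) ∈ S := by
  induction n using Nat.strong_induction_on with
  | _ n ih =>
    refine S.mem_of_natCast_mul_mem (m := n + 2) (by omega) ?_
    have h := superPowerSum_one_mul_sub a b c n
    rw [Nat.cast_add, Nat.cast_two, eq_sub_of_add_eq h.symm]
    refine S.sub_mem (S.sub_mem (S.mul_mem (hs 1 le_rfl) (hs _ (by omega))) (hs _ (by omega)))
      (S.sum_mem fun i hi => S.mul_mem (hs _ (by omega)) (ih _ ?_))
    have := mem_range.1 hi
    omega

theorem powerSum_eq_superPowerSum (p : ℕ) : powerSum p = superPowerSum (X 0) (X 1) (-X 2) p := by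
  rw [powerSum, superPowerSum, neg_pow (X 2 : MvPolynomial (Fin 3) ℂ)]

/-- The ℂ-subalgebra of `ℂ[u₁, u₂, v₁]` generated by `u₁ + u₂ + v₁` together
with the `f_p` (`p ≥ 1`) is contained in the ℂ-subalgebra generated by the
power sums `s_p` (`p ≥ 1`). -/
theorem adjoin_fGen_le_adjoin_powerSums :
    Algebra.adjoin ℂ
        (insert ((X 0 + X 1 + X 2 : MvPolynomial (Fin 3) ℂ))
          {g : MvPolynomial (Fin 3) ℂ | ∃ p : ℕ, 1 ≤ p ∧ g = fGen p}) ≤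
      Algebra.adjoin ℂ
        {g : MvPolynomial (Fin 3) ℂ | ∃ p : ℕ, 1 ≤ p ∧ g = powerSum p} := by
  set S := Algebra.adjoin ℂ {g : MvPolynomial (Fin 3) ℂ | ∃ p : ℕ, 1 ≤ p ∧ g = powerSum p}
  have hs : ∀ k, 1 ≤ k → superPowerSum (X 0) (X 1) (-X 2) k ∈ S := fun k hk =>
    powerSum_eq_superPowerSum k ▸ Algebra.subset_adjoin ⟨k, hk, rfl⟩
  rw [Algebra.adjoin_le_iff, Set.insert_subset_iff]
  refine ⟨by simpa [superPowerSum] using hs 1 le_rfl, ?_⟩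
  rintro _ ⟨p, -, rfl⟩
  have hf : fGen p = (superPowerSum (X 0) (X 1) (-X 2) 1 - -X 2) ^ (p - 1) *
      ((X 0 - -X 2) * (X 1 - -X 2)) := by
    simp only [fGen, superPowerSum]
    ring
  rw [SetLike.mem_coe, hf]
  exact sub_pow_mul_mem (hs 1 le_rfl) (pow_mul_sub_mul_sub_mem hs) (p - 1)
end
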